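/- arXiv:2510.00896 — 2 statements merged into one kernel-verified Lean document; each statement's English description precedes it below -/
import Mathlib

section
/- Let (Ω,μ) be a probability space, T : ℤ² → (Ω → Ω) a measure-preserving additive action (each T(v) is measure-preserving and T(v+w) = T(v) ∘ T(w)), and f₀ ∈ L²(μ). Define the stationary random field F(i,j)(ω) = f₀(T(i,j)ω). Let L : ℤ² → ℝ be a kernel supported in {0,…,M−1}² and h₀,…,h_{K−1} ∈ ℝ, with filter h_D(L,u) = Σ_{k=0}^{K−1} h_k (L⊗)^k u. Then for all integers 0 < B₁ ≤ B₂ with B₂ ≤ B₁ + MK, E[ ‖⊓_{B₁}( h_D(L, ⊓_{B₁}F) − h_D(L, ⊓_{B₂}F) )‖² ] ≤ C_K² (B₂² − B₁²) E[f₀²], where C_K = Σ_{k=0}^{K−1} ‖L‖₁^k |h_k|. -/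
/-!
The two windowed inputs differ, up to sign, by the field restricted to the L-shaped region
`gridBox B₂ \ gridBox B₁`, and the filter is linear. For a finitely supported kernel,
Cauchy–Schwarz gives Young's inequality `‖L ⊗ u‖ ≤ ‖L‖₁ ‖u‖`, so by the triangle inequality in `ℓ²`
the filter has norm at most `C_K`, and the outer window only decreases the norm. Taking
expectations, stationarity gives `E[F(n)²] = E[f₀²]` at each of the `B₂² - B₁²` sites of the region.
-/

open MeasureTheory

/-- 2D convolution of a kernel `L` with a signal `u` on `ℤ²`:
`(L ⊗ u)(n) = ∑_k L(k) u(n - k)`. -/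
noncomputable def conv2 (L u : ℤ × ℤ → ℝ) : ℤ × ℤ → ℝ :=
  fun n => ∑' k : ℤ × ℤ, L k * u (n - k)

/-- `k`-fold iterated 2D convolution `(L ⊗)^k u`. -/
noncomputable def convIter (L : ℤ × ℤ → ℝ) : ℕ → (ℤ × ℤ → ℝ) → (ℤ × ℤ → ℝ)
  | 0 => fun u => u
  | k + 1 => fun u => conv2 L (convIter L k u)

/-- The 2D convolutional filter `h_D(L, u) = ∑_{k=0}^{K-1} h_k (L ⊗)^k u`. -/
noncomputable def filt (L : ℤ × ℤ → ℝ) (h : ℕ → ℝ) (K : ℕ) (u : ℤ × ℤ → ℝ) : ℤ × ℤ → ℝ :=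
  fun n => ∑ k ∈ Finset.range K, h k * convIter L k u n

/-- `ℓ¹` norm `‖L‖₁` of a kernel. -/
noncomputable def kernelL1 (L : ℤ × ℤ → ℝ) : ℝ := ∑' k : ℤ × ℤ, |L k|

/-- Squared `ℓ²(ℤ²)` norm. -/
noncomputable def l2normSq (u : ℤ × ℤ → ℝ) : ℝ := ∑' v : ℤ × ℤ, u v ^ 2

/-- `ℓ²(ℤ²)` norm. -/
noncomputable def l2norm (u : ℤ × ℤ → ℝ) : ℝ := Real.sqrt (l2normSq u)

/-- Window operator `⊓_B`: restriction to the square `{0, …, B-1}²`. -/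
def window (B : ℕ) (u : ℤ × ℤ → ℝ) : ℤ × ℤ → ℝ :=
  fun n => if 0 ≤ n.1 ∧ n.1 < (B : ℤ) ∧ 0 ≤ n.2 ∧ n.2 < (B : ℤ) then u n else 0

section L2

variable {u : ℤ × ℤ → ℝ}

theorem memℓp_two_iff_summable_sq : Memℓp u 2 ↔ Summable fun n => u n ^ 2 := by
  rw [memℓp_gen_iff (by norm_num)]
  simp [Real.norm_eq_abs, sq_abs]

theorem l2norm_eq_norm (hu : Memℓp u 2) :
    l2norm u = ‖(⟨u, hu⟩ : lp (fun _ : ℤ × ℤ => ℝ) 2)‖ := by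
  rw [lp.norm_eq_tsum_rpow (by norm_num), l2norm, l2normSq, Real.sqrt_eq_rpow]
  simp [Real.norm_eq_abs, sq_abs]

theorem sq_l2norm (u : ℤ × ℤ → ℝ) : l2norm u ^ 2 = l2normSq u :=
  Real.sq_sqrt (tsum_nonneg fun _ => sq_nonneg _)

theorem l2norm_sum_smul_le {ι : Type*} (s : Finset ι) (c : ι → ℝ) {v : ι → ℤ × ℤ → ℝ}
    (hv : ∀ i, Memℓp (v i) 2) :
    l2norm (∑ i ∈ s, c i • v i) ≤ ∑ i ∈ s, |c i| * l2norm (v i) := by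
  let w : ι → lp (fun _ : ℤ × ℤ => ℝ) 2 := fun i => ⟨v i, hv i⟩
  have hw : ⇑(∑ i ∈ s, c i • w i) = ∑ i ∈ s, c i • v i := by
    rw [lp.coeFn_sum]; simp only [lp.coeFn_smul]; rfl
  calc l2norm (∑ i ∈ s, c i • v i) = ‖∑ i ∈ s, c i • w i‖ := by
        rw [← hw, l2norm_eq_norm (lp.memℓp _)]
    _ ≤ ∑ i ∈ s, ‖c i • w i‖ := norm_sum_le _ _
    _ = ∑ i ∈ s, |c i| * l2norm (v i) := by
        simp only [norm_smul, Real.norm_eq_abs, l2norm_eq_norm (hv _), w]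

end L2

section Convolution

variable {L : ℤ × ℤ → ℝ} {S : Finset (ℤ × ℤ)}

theorem conv2_eq_sum (hL : ∀ k ∉ S, L k = 0) (u : ℤ × ℤ → ℝ) (n : ℤ × ℤ) :
    conv2 L u n = ∑ k ∈ S, L k * u (n - k) :=
  tsum_eq_sum fun k hk => by rw [hL k hk, zero_mul]

theorem kernelL1_eq_sum (hL : ∀ k ∉ S, L k = 0) : kernelL1 L = ∑ k ∈ S, |L k| :=
  tsum_eq_sum fun k hk => by rw [hL k hk, abs_zero]

theorem conv2_sub (hL : ∀ k ∉ S, L k = 0) (u v : ℤ × ℤ → ℝ) :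
    conv2 L (u - v) = conv2 L u - conv2 L v := by
  ext n
  simp only [conv2_eq_sum hL, Pi.sub_apply, mul_sub, Finset.sum_sub_distrib]

theorem convIter_succ (k : ℕ) (u : ℤ × ℤ → ℝ) :
    convIter L (k + 1) u = conv2 L (convIter L k u) := rfl

theorem convIter_sub (hL : ∀ k ∉ S, L k = 0) (k : ℕ) (u v : ℤ × ℤ → ℝ) :
    convIter L k (u - v) = convIter L k u - convIter L k v := by
  induction k with
  | zero => rfl
  | succ k ih => rw [convIter_succ, convIter_succ, convIter_succ, ih, conv2_sub hL]

theorem filt_eq_sum_smul (h : ℕ → ℝ) (K : ℕ) (u : ℤ × ℤ → ℝ) :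
    filt L h K u = ∑ k ∈ Finset.range K, h k • convIter L k u := by
  ext n
  simp [filt, Finset.sum_apply]

theorem filt_sub (hL : ∀ k ∉ S, L k = 0) (h : ℕ → ℝ) (K : ℕ) (u v : ℤ × ℤ → ℝ) :
    filt L h K (u - v) = filt L h K u - filt L h K v := by
  simp only [filt_eq_sum_smul, convIter_sub hL, smul_sub, Finset.sum_sub_distrib]

theorem sq_conv2_le (hL : ∀ k ∉ S, L k = 0) (u : ℤ × ℤ → ℝ) (n : ℤ × ℤ) :
    conv2 L u n ^ 2 ≤ kernelL1 L * ∑ k ∈ S, |L k| * u (n - k) ^ 2 := by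
  rw [conv2_eq_sum hL, kernelL1_eq_sum hL]
  refine Finset.sum_sq_le_sum_mul_sum_of_sq_le_mul S (fun _ _ => abs_nonneg _)
    (fun _ _ => by positivity) fun k _ => le_of_eq ?_
  rw [mul_pow, ← mul_assoc, ← sq, sq_abs]

theorem hasSum_weighted_shifts_sq (hL : ∀ k ∉ S, L k = 0) {u : ℤ × ℤ → ℝ}
    (hu : Summable fun n => u n ^ 2) :
    HasSum (fun n => ∑ k ∈ S, |L k| * u (n - k) ^ 2) (kernelL1 L * l2normSq u) := by
  rw [kernelL1_eq_sum hL, Finset.sum_mul]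
  refine hasSum_sum fun k _ => HasSum.mul_left _ ?_
  exact (Equiv.subRight k).hasSum_iff.mpr hu.hasSum

end Convolution

section Young

variable {L : ℤ × ℤ → ℝ} {S : Finset (ℤ × ℤ)} {u : ℤ × ℤ → ℝ}

theorem Memℓp.conv2 (hL : ∀ k ∉ S, L k = 0) (hu : Memℓp u 2) : Memℓp (conv2 L u) 2 := by
  rw [memℓp_two_iff_summable_sq] at hu ⊢
  exact Summable.of_nonneg_of_le (fun _ => sq_nonneg _) (sq_conv2_le hL u)
    ((hasSum_weighted_shifts_sq hL hu).summable.mul_left _)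

theorem l2norm_conv2_le (hL : ∀ k ∉ S, L k = 0) (hu : Memℓp u 2) :
    l2norm (conv2 L u) ≤ kernelL1 L * l2norm u := by
  have hC : 0 ≤ kernelL1 L := tsum_nonneg fun _ => abs_nonneg _
  have hsq : l2normSq (conv2 L u) ≤ kernelL1 L ^ 2 * l2normSq u := by
    have hu' := memℓp_two_iff_summable_sq.mp hu
    calc l2normSq (conv2 L u)
        ≤ ∑' n, kernelL1 L * ∑ k ∈ S, |L k| * u (n - k) ^ 2 :=
          Summable.tsum_le_tsum (sq_conv2_le hL u)
            (memℓp_two_iff_summable_sq.mp (hu.conv2 hL))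
            ((hasSum_weighted_shifts_sq hL hu').summable.mul_left _)
      _ = kernelL1 L ^ 2 * l2normSq u := by
          rw [tsum_mul_left, (hasSum_weighted_shifts_sq hL hu').tsum_eq]; ring
  rw [l2norm, l2norm, ← Real.sqrt_sq hC, ← Real.sqrt_mul (sq_nonneg _)]
  exact Real.sqrt_le_sqrt hsq

theorem Memℓp.convIter (hL : ∀ k ∉ S, L k = 0) (hu : Memℓp u 2) (k : ℕ) :
    Memℓp (convIter L k u) 2 := by
  induction k with
  | zero => exact hu
  | succ k ih => exact ih.conv2 hL

theorem l2norm_convIter_le (hL : ∀ k ∉ S, L k = 0) (hu : Memℓp u 2) (k : ℕ) :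
    l2norm (convIter L k u) ≤ kernelL1 L ^ k * l2norm u := by
  induction k with
  | zero => simp [convIter]
  | succ k ih =>
    have hC : 0 ≤ kernelL1 L := tsum_nonneg fun _ => abs_nonneg _
    calc l2norm (convIter L (k + 1) u) ≤ kernelL1 L * l2norm (convIter L k u) :=
          l2norm_conv2_le hL (hu.convIter hL k)
      _ ≤ kernelL1 L * (kernelL1 L ^ k * l2norm u) := mul_le_mul_of_nonneg_left ih hC
      _ = kernelL1 L ^ (k + 1) * l2norm u := by ring

theorem Memℓp.filt (hL : ∀ k ∉ S, L k = 0) (hu : Memℓp u 2) (h : ℕ → ℝ) (K : ℕ) :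
    Memℓp (filt L h K u) 2 :=
  Memℓp.finsetSum _ fun k _ => (hu.convIter hL k).const_smul (h k)

theorem l2norm_filt_le (hL : ∀ k ∉ S, L k = 0) (hu : Memℓp u 2) (h : ℕ → ℝ) (K : ℕ) :
    l2norm (filt L h K u) ≤ (∑ k ∈ Finset.range K, kernelL1 L ^ k * |h k|) * l2norm u := by
  rw [filt_eq_sum_smul, Finset.sum_mul]
  refine (l2norm_sum_smul_le _ h (hu.convIter hL)).trans
    (Finset.sum_le_sum fun k _ => ?_)
  rw [mul_comm _ |h k|, mul_assoc]
  exact mul_le_mul_of_nonneg_left (l2norm_convIter_le hL hu k) (abs_nonneg _)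

end Young

section Window

noncomputable def gridBox (B : ℕ) : Finset (ℤ × ℤ) := Finset.Ico 0 (B : ℤ) ×ˢ Finset.Ico 0 (B : ℤ)

theorem mem_gridBox {B : ℕ} {n : ℤ × ℤ} :
    n ∈ gridBox B ↔ 0 ≤ n.1 ∧ n.1 < (B : ℤ) ∧ 0 ≤ n.2 ∧ n.2 < (B : ℤ) := by
  simp [gridBox, and_assoc]

theorem gridBox_mono : Monotone gridBox := fun _ _ hB _ hn => by
  rw [mem_gridBox] at hn ⊢
  omega

theorem card_gridBox (B : ℕ) : (gridBox B).card = B * B := by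
  simp [gridBox]

theorem cast_card_gridBox_sdiff {B₁ B₂ : ℕ} (hB : B₁ ≤ B₂) :
    ((gridBox B₂ \ gridBox B₁).card : ℝ) = (B₂ : ℝ) ^ 2 - (B₁ : ℝ) ^ 2 := by
  rw [Finset.card_sdiff_of_subset (gridBox_mono hB), card_gridBox, card_gridBox,
    Nat.cast_sub (Nat.mul_le_mul hB hB)]
  push_cast
  ring

theorem window_eq_indicator (B : ℕ) (u : ℤ × ℤ → ℝ) :
    window B u = (gridBox B : Set (ℤ × ℤ)).indicator u := by
  ext n
  simp only [window, Set.indicator, Finset.mem_coe, mem_gridBox]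

theorem l2normSq_indicator (s : Finset (ℤ × ℤ)) (u : ℤ × ℤ → ℝ) :
    l2normSq ((s : Set (ℤ × ℤ)).indicator u) = ∑ n ∈ s, u n ^ 2 := by
  rw [l2normSq, tsum_eq_sum (s := s) fun n hn => by simp [hn]]
  exact Finset.sum_congr rfl fun n hn => by simp [hn]

theorem memℓp_indicator (s : Finset (ℤ × ℤ)) (u : ℤ × ℤ → ℝ) :
    Memℓp ((s : Set (ℤ × ℤ)).indicator u) 2 :=
  memℓp_two_iff_summable_sq.mpr (summable_of_ne_finset_zero (s := s) fun n hn => by simp [hn])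

theorem l2normSq_window_le {u : ℤ × ℤ → ℝ} (hu : Memℓp u 2) (B : ℕ) :
    l2normSq (window B u) ≤ l2normSq u := by
  rw [window_eq_indicator, l2normSq_indicator]
  exact (memℓp_two_iff_summable_sq.mp hu).sum_le_tsum _ fun _ _ => sq_nonneg _

theorem window_sub_window {B₁ B₂ : ℕ} (hB : B₁ ≤ B₂) (u : ℤ × ℤ → ℝ) :
    window B₁ u - window B₂ u = -(↑(gridBox B₂ \ gridBox B₁) : Set (ℤ × ℤ)).indicator u := by
  rw [window_eq_indicator, window_eq_indicator, Finset.coe_sdiff,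
    Set.indicator_sdiff (Finset.coe_subset.mpr (gridBox_mono hB)), neg_sub]

theorem memℓp_window_sub_window {B₁ B₂ : ℕ} (hB : B₁ ≤ B₂) (u : ℤ × ℤ → ℝ) :
    Memℓp (window B₁ u - window B₂ u) 2 := by
  rw [window_sub_window hB]
  exact (memℓp_indicator _ u).neg

theorem l2normSq_window_sub_window {B₁ B₂ : ℕ} (hB : B₁ ≤ B₂) (u : ℤ × ℤ → ℝ) :
    l2normSq (window B₁ u - window B₂ u) = ∑ n ∈ gridBox B₂ \ gridBox B₁, u n ^ 2 := by
  rw [window_sub_window hB, ← l2normSq_indicator]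
  simp only [l2normSq, Pi.neg_apply, neg_sq]

end Window

theorem l2normSq_window_filt_sub_le {L : ℤ × ℤ → ℝ} {S : Finset (ℤ × ℤ)}
    (hL : ∀ k ∉ S, L k = 0) (h : ℕ → ℝ) (K : ℕ) {B₁ B₂ : ℕ} (hB : B₁ ≤ B₂)
    (u : ℤ × ℤ → ℝ) :
    l2normSq (window B₁ (filt L h K (window B₁ u) - filt L h K (window B₂ u)))
      ≤ (∑ k ∈ Finset.range K, kernelL1 L ^ k * |h k|) ^ 2
        * ∑ n ∈ gridBox B₂ \ gridBox B₁, u n ^ 2 := by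
  have hg := memℓp_window_sub_window hB u
  rw [← filt_sub hL, ← l2normSq_window_sub_window hB, ← sq_l2norm (window B₁ u - _), ← mul_pow]
  calc l2normSq (window B₁ (filt L h K (window B₁ u - window B₂ u)))
      ≤ l2normSq (filt L h K (window B₁ u - window B₂ u)) := l2normSq_window_le (hg.filt hL h K) B₁
    _ = l2norm (filt L h K (window B₁ u - window B₂ u)) ^ 2 := (sq_l2norm _).symm
    _ ≤ _ := pow_le_pow_left₀ (Real.sqrt_nonneg _) (l2norm_filt_le hL hg h K) 2

theorem MeasureTheory.MeasurePreserving.integral_comp_of_aestronglyMeasurable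
    {α β E : Type*} [MeasurableSpace α] [MeasurableSpace β] [NormedAddCommGroup E]
    [NormedSpace ℝ E] {μ : Measure α} {ν : Measure β} {f : α → β}
    (hf : MeasurePreserving f μ ν) {g : β → E} (hg : AEStronglyMeasurable g ν) :
    ∫ x, g (f x) ∂μ = ∫ y, g y ∂ν := by
  rw [← hf.map_eq] at hg ⊢
  exact (integral_map hf.measurable.aemeasurable hg).symm

theorem integral_sum_sq_comp_eq_card_mul {Ω : Type*} [MeasurableSpace Ω] {μ : Measure Ω}
    {T : ℤ × ℤ → Ω → Ω} (hT : ∀ v, MeasurePreserving (T v) μ μ) {f₀ : Ω → ℝ}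
    (hf₀ : MemLp f₀ 2 μ) (s : Finset (ℤ × ℤ)) :
    ∫ ω, ∑ n ∈ s, f₀ (T n ω) ^ 2 ∂μ = s.card * ∫ ω, f₀ ω ^ 2 ∂μ := by
  rw [integral_finsetSum (f := fun n ω => f₀ (T n ω) ^ 2) s
    fun n _ => (hf₀.comp_measurePreserving (hT n)).integrable_sq]
  simp only [fun n => (hT n).integral_comp_of_aestronglyMeasurable
    (g := fun x => f₀ x ^ 2) hf₀.integrable_sq.aestronglyMeasurable,
    Finset.sum_const, nsmul_eq_mul]

theorem filter_transfer_grid_general {Ω : Type*} [MeasurableSpace Ω]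
    (μ : Measure Ω)
    (T : ℤ × ℤ → Ω → Ω) (hT : ∀ v, MeasurePreserving (T v) μ μ)
    (f₀ : Ω → ℝ) (hf₀ : MemLp f₀ 2 μ)
    (L : ℤ × ℤ → ℝ) (M : ℕ)
    (hL : ∀ k : ℤ × ℤ, L k ≠ 0 → 0 ≤ k.1 ∧ k.1 < (M : ℤ) ∧ 0 ≤ k.2 ∧ k.2 < (M : ℤ))
    (K : ℕ) (h : ℕ → ℝ)
    (B₁ B₂ : ℕ) (hB : B₁ ≤ B₂) :
    ∫ ω, l2normSq (window B₁ (fun n =>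
          filt L h K (window B₁ (fun w => f₀ (T w ω))) n
            - filt L h K (window B₂ (fun w => f₀ (T w ω))) n)) ∂μ
      ≤ (∑ k ∈ Finset.range K, kernelL1 L ^ k * |h k|) ^ 2
        * ((B₂ : ℝ) ^ 2 - (B₁ : ℝ) ^ 2) * ∫ ω, f₀ ω ^ 2 ∂μ := by
  have hL' : ∀ k ∉ gridBox M, L k = 0 := fun k hk =>
    by_contra fun hne => hk (mem_gridBox.mpr (hL k hne))
  calc _ ≤ ∫ ω, (∑ k ∈ Finset.range K, kernelL1 L ^ k * |h k|) ^ 2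
          * ∑ n ∈ gridBox B₂ \ gridBox B₁, f₀ (T n ω) ^ 2 ∂μ :=
        integral_mono_of_nonneg (ae_of_all _ fun _ => tsum_nonneg fun _ => sq_nonneg _)
          ((integrable_finsetSum _ fun n _ =>
            (hf₀.comp_measurePreserving (hT n)).integrable_sq).const_mul _)
          (ae_of_all _ fun _ => l2normSq_window_filt_sub_le hL' h K hB _)
    _ = _ := by
        rw [integral_const_mul, integral_sum_sq_comp_eq_card_mul hT hf₀,
          cast_card_gridBox_sdiff hB, mul_assoc]

/-- **Proposition 1: transferability of filters between grid graphs.**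
For the stationary field `F(i,j)(ω) = f₀(T(i,j)ω)`, a kernel supported in `{0,…,M-1}²`,
and integers `0 < B₁ ≤ B₂ ≤ B₁ + M K`,
`E[‖⊓_{B₁}(h_D(L, ⊓_{B₁}F) - h_D(L, ⊓_{B₂}F))‖²] ≤ C_K² (B₂² - B₁²) E[f₀²]`,
where `C_K = ∑_{k=0}^{K-1} ‖L‖₁ᵏ |h_k|`. -/
theorem filter_transfer_grid {Ω : Type*} [MeasurableSpace Ω]
    (μ : Measure Ω) [IsProbabilityMeasure μ]
    (T : ℤ × ℤ → Ω → Ω) (hT : ∀ v, MeasurePreserving (T v) μ μ)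
    (hTadd : ∀ v w, T (v + w) = T v ∘ T w)
    (f₀ : Ω → ℝ) (hf₀ : MemLp f₀ 2 μ)
    (L : ℤ × ℤ → ℝ) (M : ℕ)
    (hL : ∀ k : ℤ × ℤ, L k ≠ 0 → 0 ≤ k.1 ∧ k.1 < (M : ℤ) ∧ 0 ≤ k.2 ∧ k.2 < (M : ℤ))
    (K : ℕ) (h : ℕ → ℝ)
    (B₁ B₂ : ℕ) (hB₁ : 0 < B₁) (hB : B₁ ≤ B₂) (hBMK : B₂ ≤ B₁ + M * K) :
    ∫ ω, l2normSq (window B₁ (fun n =>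
          filt L h K (window B₁ (fun w => f₀ (T w ω))) n
            - filt L h K (window B₂ (fun w => f₀ (T w ω))) n)) ∂μ
      ≤ (∑ k ∈ Finset.range K, kernelL1 L ^ k * |h k|) ^ 2
        * ((B₂ : ℝ) ^ 2 - (B₁ : ℝ) ^ 2) * ∫ ω, f₀ ω ^ 2 ∂μ :=
  filter_transfer_grid_general μ T hT f₀ hf₀ L M hL K h B₁ B₂ hB
end

section
/- Let n ∈ ℕ⁺, let C ∈ ℝ^{n×n} be symmetric with eigenvalues λ₁,…,λ_n and orthonormal eigenbasis, let W ∈ ℝ^{n×n} be symmetric, and let h₀,…,h_K ∈ ℝ. Suppose that for all pairs of eigenvalues (λ_i, λ_j) of C the divided difference of the frequency response ĥ(λ) = Σ_{k=0}^K h_k λ^k is bounded: | Σ_{k=0}^{K} h_k Σ_{r=1}^{k} λ_i^{k−r} λ_j^{r−1} | ≤ C₀ (this quantity equals (ĥ(λ_i) − ĥ(λ_j))/(λ_i − λ_j) when λ_i ≠ λ_j and ĥ'(λ_i) when λ_i = λ_j). Then for every x ∈ ℝⁿ, ‖ Σ_{k=0}^{K} h_k ( Σ_{r=1}^{k} C^{k−r}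 W C^{r−1} ) x ‖² ≤ n · C₀² · ‖W²‖₂ · ‖x‖². -/
/-!
Let `P` be the orthogonal matrix whose rows are the eigenvectors `eᵢ`, so that `P C Pᵀ` is the
diagonal matrix of the `λᵢ`. Conjugating by `P` turns each term `C^{k-r} W C^{r-1}` into
`λᵢ^{k-r} Ŵᵢⱼ λⱼ^{r-1}` with `Ŵ = P W Pᵀ`, so the whole first-order term becomes the Hadamard
product `G ⊙ Ŵ` of `Ŵ` with the matrix `G` of divided differences. Row by row, Cauchy–Schwarz and
`|Gᵢⱼ| ≤ C₀` bound `‖(G ⊙ Ŵ) z‖²` by `C₀² ‖Ŵ‖_F² ‖z‖²`; the Frobenius norm is invariant under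
conjugation, and `‖W‖_F² = tr (W²) ≤ n ‖W²‖₂` because each diagonal entry of `W²` is at most
its spectral norm.
-/

open Matrix

/-- Euclidean norm of a vector in `ℝⁿ`. -/
noncomputable def eNorm {n : ℕ} (x : Fin n → ℝ) : ℝ := Real.sqrt (∑ i, x i ^ 2)

/-- Spectral (operator 2-) norm of a real `n × n` matrix. -/
noncomputable def specNorm {n : ℕ} (M : Matrix (Fin n) (Fin n) ℝ) : ℝ :=
  ‖Matrix.toEuclideanCLM (𝕜 := ℝ) M‖

theorem eNorm_sq {n : ℕ} (x : Fin n → ℝ) : eNorm x ^ 2 = x ⬝ᵥ x := by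
  rw [eNorm, Real.sq_sqrt (by positivity)]
  simp only [dotProduct, sq]

theorem diag_le_specNorm {n : ℕ} (M : Matrix (Fin n) (Fin n) ℝ) (i : Fin n) :
    M i i ≤ specNorm M := by
  set u : EuclideanSpace ℝ (Fin n) := EuclideanSpace.single i 1
  have hu : ‖u‖ = 1 := by simp [u]
  calc M i i = inner ℝ u (toEuclideanCLM (𝕜 := ℝ) M u) := by simp [u, inner_toEuclideanCLM]
    _ ≤ ‖u‖ * ‖toEuclideanCLM (𝕜 := ℝ) M u‖ := real_inner_le_norm _ _
    _ ≤ specNorm M := by simpa [hu, specNorm] using (toEuclideanCLM (𝕜 := ℝ) M).le_opNorm u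

theorem trace_le_card_mul_specNorm {n : ℕ} (M : Matrix (Fin n) (Fin n) ℝ) :
    M.trace ≤ n * specNorm M := by
  simpa [trace] using Finset.sum_le_sum fun i (_ : i ∈ Finset.univ) => diag_le_specNorm M i

theorem conj_pow_mul_mul_pow {M : Type*} [Monoid M] {P Q C D : M} (hPQ : P * Q = 1)
    (hQP : Q * P = 1) (hCQ : C * Q = Q * D) (W : M) (a b : ℕ) :
    P * (C ^ a * W * C ^ b) * Q = D ^ a * (P * W * Q) * D ^ b := by
  have hPC : P * C = D * P := calc
    P * C = P * (C * Q) * P := by simp only [mul_assoc, hQP, mul_one]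
    _ = D * P := by rw [hCQ, ← mul_assoc P Q D, hPQ, one_mul]
  have hPCa : P * C ^ a = D ^ a * P := SemiconjBy.pow_right hPC a
  have hCbQ : C ^ b * Q = Q * D ^ b := (SemiconjBy.pow_right hCQ.symm b).eq.symm
  calc P * (C ^ a * W * C ^ b) * Q = (P * C ^ a) * W * (C ^ b * Q) := by simp only [mul_assoc]
    _ = D ^ a * (P * W * Q) * D ^ b := by rw [hPCa, hCbQ]; simp only [mul_assoc]

section

variable {m n : Type*} [Fintype m] [Fintype n]

theorem sum_sum_sq_eq_trace_mul_transpose (A : Matrix m n ℝ) :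
    ∑ i, ∑ j, A i j ^ 2 = (A * Aᵀ).trace := by
  simp [trace, mul_apply, sq]

theorem hadamard_mulVec_dotProduct_self_le {G : Matrix m n ℝ} {c : ℝ} (hG : ∀ i j, |G i j| ≤ c)
    (A : Matrix m n ℝ) (z : n → ℝ) :
    ((G ⊙ A) *ᵥ z) ⬝ᵥ ((G ⊙ A) *ᵥ z) ≤ c ^ 2 * (∑ i, ∑ j, A i j ^ 2) * (z ⬝ᵥ z) := by
  have hrow : ∀ i, ((G ⊙ A) *ᵥ z) i ^ 2 ≤ c ^ 2 * (z ⬝ᵥ z) * ∑ j, A i j ^ 2 := fun i => calc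
    ((G ⊙ A) *ᵥ z) i ^ 2 = (∑ j, (G i j * z j) * A i j) ^ 2 := by
        simp only [mulVec, dotProduct, hadamard_apply]
        exact congrArg (· ^ 2) (Finset.sum_congr rfl fun j _ => by ring)
    _ ≤ (∑ j, (G i j * z j) ^ 2) * ∑ j, A i j ^ 2 := Finset.sum_mul_sq_le_sq_mul_sq _ _ _
    _ ≤ c ^ 2 * (z ⬝ᵥ z) * ∑ j, A i j ^ 2 := by
        gcongr
        rw [dotProduct, Finset.mul_sum]
        gcongr with j
        rw [mul_pow, ← sq_abs (G i j), ← sq]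
        gcongr
        exact hG i j
  calc ((G ⊙ A) *ᵥ z) ⬝ᵥ ((G ⊙ A) *ᵥ z) = ∑ i, ((G ⊙ A) *ᵥ z) i ^ 2 := by
        simp only [dotProduct, sq]
    _ ≤ ∑ i, c ^ 2 * (z ⬝ᵥ z) * ∑ j, A i j ^ 2 := Finset.sum_le_sum fun i _ => hrow i
    _ = c ^ 2 * (∑ i, ∑ j, A i j ^ 2) * (z ⬝ᵥ z) := by rw [← Finset.mul_sum]; ring

end

section

variable {m : Type*} [Fintype m] [DecidableEq m]

theorem of_mul_transpose_self_eq_one {e : m → m → ℝ}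
    (horth : ∀ i j, e i ⬝ᵥ e j = if i = j then 1 else 0) : of e * (of e)ᵀ = 1 := by
  ext i j
  simpa [mul_apply, one_apply, dotProduct] using horth i j

theorem mul_of_transpose_eq_of_transpose_mul_diagonal {C : Matrix m m ℝ} {lam : m → ℝ}
    {e : m → m → ℝ} (heig : ∀ i, C *ᵥ e i = lam i • e i) :
    C * (of e)ᵀ = (of e)ᵀ * diagonal lam := by
  ext t i
  rw [mul_diagonal]
  simpa [mul_apply, mulVec, dotProduct, mul_comm] using congrFun (heig i) t

theorem dotProduct_mulVec_self_of_transpose_mul_self {P : Matrix m m ℝ} (hP : Pᵀ * P = 1)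
    (v : m → ℝ) : (P *ᵥ v) ⬝ᵥ (P *ᵥ v) = v ⬝ᵥ v := by
  rw [dotProduct_mulVec, ← vecMul_transpose, vecMul_vecMul, hP, vecMul_one]

theorem sum_sum_sq_conj_eq_trace {P : Matrix m m ℝ} (hP : Pᵀ * P = 1) (A : Matrix m m ℝ) :
    ∑ i, ∑ j, (P * A * Pᵀ) i j ^ 2 = (A * Aᵀ).trace := by
  have hconj : P * A * Pᵀ * (P * A * Pᵀ)ᵀ = P * (A * Aᵀ) * Pᵀ := by
    simp only [transpose_mul, transpose_transpose, Matrix.mul_assoc]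
    rw [← Matrix.mul_assoc Pᵀ P, hP, Matrix.one_mul]
  rw [sum_sum_sq_eq_trace_mul_transpose, hconj, trace_mul_cycle, hP, Matrix.one_mul]

theorem diagonal_pow_mul_mul_diagonal_pow_apply (d : m → ℝ) (A : Matrix m m ℝ) (a b : ℕ)
    (i j : m) : (diagonal d ^ a * A * diagonal d ^ b) i j = d i ^ a * A i j * d j ^ b := by
  simp [diagonal_pow, mul_diagonal, diagonal_mul]

/-- At `a ≠ b` this is the divided difference `(ĥ a - ĥ b) / (a - b)` of the frequency response
`ĥ λ = ∑ₖ hₖ λᵏ`, and at `a = b` it is `ĥ' a`. -/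
def freqResponseDivDiff (h : ℕ → ℝ) (K : ℕ) (a b : ℝ) : ℝ :=
  ∑ k ∈ Finset.range (K + 1), h k * ∑ r ∈ Finset.Icc 1 k, a ^ (k - r) * b ^ (r - 1)

/-- The first-order term of `∑ₖ hₖ ((C + W)ᵏ - Cᵏ)` in `W`. -/
def filterFirstOrderTerm (h : ℕ → ℝ) (K : ℕ) (C W : Matrix m m ℝ) : Matrix m m ℝ :=
  ∑ k ∈ Finset.range (K + 1), h k • ∑ r ∈ Finset.Icc 1 k, C ^ (k - r) * W * C ^ (r - 1)

theorem conj_filterFirstOrderTerm {P Q C : Matrix m m ℝ} {lam : m → ℝ} (hPQ : P * Q = 1)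
    (hQP : Q * P = 1) (hCQ : C * Q = Q * diagonal lam) (h : ℕ → ℝ) (K : ℕ) (W : Matrix m m ℝ) :
    P * filterFirstOrderTerm h K C W * Q =
      of (fun i j => freqResponseDivDiff h K (lam i) (lam j)) ⊙ (P * W * Q) := by
  ext i j
  simp only [filterFirstOrderTerm, freqResponseDivDiff, Finset.mul_sum, Finset.sum_mul,
    Matrix.mul_smul, Matrix.smul_mul, conj_pow_mul_mul_pow hPQ hQP hCQ, Matrix.sum_apply,
    Matrix.smul_apply, diagonal_pow_mul_mul_diagonal_pow_apply, hadamard_apply, of_apply,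
    smul_eq_mul]
  exact Finset.sum_congr rfl fun k _ => Finset.sum_congr rfl fun r _ => by ring

end

theorem first_order_perturbation_bound_general (n : ℕ)
    (C : Matrix (Fin n) (Fin n) ℝ)
    (lam : Fin n → ℝ) (e : Fin n → (Fin n → ℝ))
    (heig : ∀ i, C.mulVec (e i) = lam i • e i)
    (horth : ∀ i j, dotProduct (e i) (e j) = if i = j then 1 else 0)
    (W : Matrix (Fin n) (Fin n) ℝ) (hW : W.IsSymm)
    (K : ℕ) (h : ℕ → ℝ) (C₀ : ℝ)
    (hdiv : ∀ i j : Fin n,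
      |∑ k ∈ Finset.range (K + 1),
          h k * ∑ r ∈ Finset.Icc 1 k, lam i ^ (k - r) * lam j ^ (r - 1)| ≤ C₀)
    (x : Fin n → ℝ) :
    eNorm ((∑ k ∈ Finset.range (K + 1),
        h k • ∑ r ∈ Finset.Icc 1 k, C ^ (k - r) * W * C ^ (r - 1)).mulVec x) ^ 2
      ≤ (n : ℝ) * C₀ ^ 2 * specNorm (W ^ 2) * eNorm x ^ 2 := by
  change eNorm (filterFirstOrderTerm h K C W *ᵥ x) ^ 2 ≤ _
  set P : Matrix (Fin n) (Fin n) ℝ := of e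
  set G : Matrix (Fin n) (Fin n) ℝ := of fun i j => freqResponseDivDiff h K (lam i) (lam j)
  have hPPt : P * Pᵀ = 1 := of_mul_transpose_self_eq_one horth
  have hPtP : Pᵀ * P = 1 := mul_eq_one_comm.mp hPPt
  have hconj := conj_filterFirstOrderTerm hPPt hPtP
    (mul_of_transpose_eq_of_transpose_mul_diagonal heig) h K W
  have hcoord : P *ᵥ (filterFirstOrderTerm h K C W *ᵥ x) = (G ⊙ (P * W * Pᵀ)) *ᵥ (P *ᵥ x) := by
    rw [← hconj, mulVec_mulVec, mulVec_mulVec, Matrix.mul_assoc _ Pᵀ, hPtP, Matrix.mul_one]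
  calc eNorm (filterFirstOrderTerm h K C W *ᵥ x) ^ 2
      = ((G ⊙ (P * W * Pᵀ)) *ᵥ (P *ᵥ x)) ⬝ᵥ ((G ⊙ (P * W * Pᵀ)) *ᵥ (P *ᵥ x)) := by
        rw [eNorm_sq, ← hcoord, dotProduct_mulVec_self_of_transpose_mul_self hPtP]
    _ ≤ C₀ ^ 2 * (∑ i, ∑ j, (P * W * Pᵀ) i j ^ 2) * ((P *ᵥ x) ⬝ᵥ (P *ᵥ x)) :=
        hadamard_mulVec_dotProduct_self_le hdiv _ _
    _ = C₀ ^ 2 * (W ^ 2).trace * eNorm x ^ 2 := by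
        rw [sum_sum_sq_conj_eq_trace hPtP, hW.eq, ← sq,
          dotProduct_mulVec_self_of_transpose_mul_self hPtP, eNorm_sq]
    _ ≤ C₀ ^ 2 * (n * specNorm (W ^ 2)) * eNorm x ^ 2 := by
        gcongr
        exact trace_le_card_mul_specNorm _
    _ = n * C₀ ^ 2 * specNorm (W ^ 2) * eNorm x ^ 2 := by ring

/-- **Deterministic core of Proposition 2.**
Let `C` be symmetric with eigenvalues `λᵢ` and orthonormal eigenbasis `eᵢ`, `W` symmetric,
and suppose the divided differences of the frequency response `ĥ(λ) = ∑_k h_k λᵏ` satisfy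
`|∑_{k=0}^K h_k ∑_{r=1}^k λᵢ^{k-r} λⱼ^{r-1}| ≤ C₀` for all eigenvalue pairs. Then
`‖∑_k h_k (∑_{r=1}^k C^{k-r} W C^{r-1}) x‖² ≤ n C₀² ‖W²‖₂ ‖x‖²`. -/
theorem first_order_perturbation_bound (n : ℕ)
    (C : Matrix (Fin n) (Fin n) ℝ) (hC : C.IsSymm)
    (lam : Fin n → ℝ) (e : Fin n → (Fin n → ℝ))
    (heig : ∀ i, C.mulVec (e i) = lam i • e i)
    (horth : ∀ i j, dotProduct (e i) (e j) = if i = j then 1 else 0)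
    (W : Matrix (Fin n) (Fin n) ℝ) (hW : W.IsSymm)
    (K : ℕ) (h : ℕ → ℝ) (C₀ : ℝ) (hC₀ : 0 ≤ C₀)
    (hdiv : ∀ i j : Fin n,
      |∑ k ∈ Finset.range (K + 1),
          h k * ∑ r ∈ Finset.Icc 1 k, lam i ^ (k - r) * lam j ^ (r - 1)| ≤ C₀)
    (x : Fin n → ℝ) :
    eNorm ((∑ k ∈ Finset.range (K + 1),
        h k • ∑ r ∈ Finset.Icc 1 k, C ^ (k - r) * W * C ^ (r - 1)).mulVec x) ^ 2
      ≤ (n : ℝ) * C₀ ^ 2 * specNorm (W ^ 2) * eNorm x ^ 2 :=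
  first_order_perturbation_bound_general n C lam e heig horth W hW K h C₀ hdiv x
end
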